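/- A category C with an ordinal degree function on its objects is a c-Reedy category (with the wide subcategories C⃡, C⃗, C⃖ given as data satisfying: C⃡ ⊆ C⃗ ∩ C⃖; every morphism of C⃡ is level; every morphism of C⃗ \ C⃡ strictly raises degree and every morphism of C⃖ \ C⃡ strictly lowers degree; every morphism factors as a C⃖-morphism followed by a C⃗-morphism, with the category of such factorizations and C⃡-connecting-maps connected; and for every x and degree δ < deg(x), the functor C⃖(x,−) : C⃡_{=δ} → Set is a coproduct of retracts of representables) if and only if C is an almost c-Reedy category and the classes of basic non-strictly degree-raising and basic non-strictly degree-lowering morphisms are each closed under composition. -/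

import Mathlib

open CategoryTheory Category

universe w v u

variable {C : Type u} [Category.{v} C]

/-- A fundamental factorization of `f : x ⟶ y`: a factorization through an
object of degree strictly smaller than the degrees of both `x` and `y`. -/
structure FdFact (deg : C → Ordinal.{w}) {x y : C} (f : x ⟶ y) where
  z : C
  g : x ⟶ z
  h : z ⟶ y
  fac : g ≫ h = f
  lt_src : deg z < deg x
  lt_tgt : deg z < deg y

/-- A morphism is basic if it admits no fundamental factorization. -/
def Basic (deg : C → Ordinal.{w}) {x y : C} (f : x ⟶ y) : Prop :=
  IsEmpty (FdFact deg f)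

/-- A connecting morphism between two fundamental factorizations of `f`. -/
def FdConn (deg : C → Ordinal.{w}) {x y : C} {f : x ⟶ y}
    (F F' : FdFact deg f) : Prop :=
  ∃ k : F.z ⟶ F'.z, F.g ≫ k = F'.g ∧ k ≫ F'.h = F.h

/-- Two fundamental factorizations are connected by a zigzag of connecting
morphisms. -/
def FdZigzag (deg : C → Ordinal.{w}) {x y : C} {f : x ⟶ y} :
    FdFact deg f → FdFact deg f → Prop :=
  Relation.ReflTransGen (fun F F' => FdConn deg F F' ∨ FdConn deg F' F)

/-- `C` (with the degree function `deg`) is almost-Reedy: the basic level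
morphisms are exactly the identities, and the category of fundamental
factorizations of any (non-basic) morphism is connected. -/
def AlmostReedy (deg : C → Ordinal.{w}) : Prop :=
  (∀ x : C, Basic deg (𝟙 x)) ∧
  (∀ ⦃x y : C⦄ (f : x ⟶ y), deg x = deg y → Basic deg f → x = y ∧ HEq f (𝟙 x)) ∧
  (∀ ⦃x y : C⦄ (f : x ⟶ y) (F F' : FdFact deg f), FdZigzag deg F F')

/-- The class `C⃖` of basic morphisms that non-strictly lower degree. -/
def Lowering (deg : C → Ordinal.{w}) {x y : C} (f : x ⟶ y) : Prop :=
  Basic deg f ∧ deg y ≤ deg x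

/-- The class `C⃗` of basic morphisms that non-strictly raise degree. -/
def Raising (deg : C → Ordinal.{w}) {x y : C} (f : x ⟶ y) : Prop :=
  Basic deg f ∧ deg x ≤ deg y

/-- A basic level morphism: basic, with domain and codomain of equal degree. -/
def BasicLevel (deg : C → Ordinal.{w}) {x y : C} (f : x ⟶ y) : Prop :=
  Basic deg f ∧ deg x = deg y

/-- `C` (with the degree function `deg`) is almost c-Reedy:
(1) all identities are basic;
(2) basic level morphisms are closed under composition;
(3) the category of fundamental factorizations of any (non-basic) morphism is
    connected;
(4) the composite of a basic strictly-degree-decreasing morphism followed by a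
    basic level morphism is basic;
(5) for each `x` and each degree `δ < deg x`, the functor of basic morphisms
    from `x` on the `δ`-th stratum is a coproduct of retracts of representables,
    phrased elementarily: any cospan of basic level morphisms under basic
    strictly-decreasing morphisms out of `x` admits a compatible cone. -/
def AlmostCReedy (deg : C → Ordinal.{w}) : Prop :=
  (∀ x : C, Basic deg (𝟙 x)) ∧
  (∀ ⦃x y z : C⦄ (f : x ⟶ y) (g : y ⟶ z), deg x = deg y → deg y = deg z →
    Basic deg f → Basic deg g → Basic deg (f ≫ g)) ∧
  (∀ ⦃x y : C⦄ (f : x ⟶ y) (F F' : FdFact deg f), FdZigzag deg F F') ∧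
  (∀ ⦃x y z : C⦄ (f : x ⟶ y) (g : y ⟶ z), Basic deg f → deg y < deg x →
    Basic deg g → deg y = deg z → Basic deg (f ≫ g)) ∧
  (∀ ⦃x y₁ y₂ y₃ : C⦄ (f₁ : x ⟶ y₁) (f₂ : x ⟶ y₂) (f₃ : x ⟶ y₃)
      (g₁ : y₁ ⟶ y₂) (g₃ : y₃ ⟶ y₂),
    deg y₁ < deg x → deg y₁ = deg y₂ → deg y₂ = deg y₃ →
    Basic deg f₁ → Basic deg f₂ → Basic deg f₃ → Basic deg g₁ → Basic deg g₃ →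
    f₁ ≫ g₁ = f₂ → f₃ ≫ g₃ = f₂ →
    ∃ (y₀ : C) (f₀ : x ⟶ y₀) (h₁ : y₀ ⟶ y₁) (h₃ : y₀ ⟶ y₃),
      deg y₀ = deg y₁ ∧ Basic deg f₀ ∧ Basic deg h₁ ∧ Basic deg h₃ ∧
      f₀ ≫ h₁ = f₁ ∧ f₀ ≫ h₃ = f₃ ∧ h₁ ≫ g₁ = h₃ ≫ g₃)

/-- A `(C⃖, C⃗)`-factorization of `f`. -/
structure MPFact (P Mi : MorphismProperty C) {x y : C} (f : x ⟶ y) where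
  z : C
  g : x ⟶ z
  h : z ⟶ y
  memMi : Mi g
  memP : P h
  fac : g ≫ h = f

/-- A connecting morphism between two `(C⃖, C⃗)`-factorizations lying in the
wide subcategory `W = C⃡`. -/
def MPConn (W : MorphismProperty C) {P Mi : MorphismProperty C} {x y : C}
    {f : x ⟶ y} (a b : MPFact P Mi f) : Prop :=
  ∃ k : a.z ⟶ b.z, W k ∧ a.g ≫ k = b.g ∧ k ≫ b.h = a.h

/-- The notion of c-Reedy category, with the wide subcategories `W = C⃡`,
`P = C⃗`, `Mi = C⃖` given as data:
`C⃡ ⊆ C⃗ ∩ C⃖`; every `C⃡`-morphism is level; every `C⃗`-morphism outside `C⃡`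
strictly raises degree and every `C⃖`-morphism outside `C⃡` strictly lowers
degree; every morphism admits a `C⃖`-then-`C⃗` factorization and the category of
such factorizations with `C⃡`-connecting maps is connected; and for every `x`
and degree `δ < deg x` the functor `C⃖(x,−) : C⃡_{=δ} → Set` is a coproduct of
retracts of representables (phrased elementarily via cones). -/
def IsCReedyWith (deg : C → Ordinal.{w}) (W P Mi : MorphismProperty C) : Prop :=
  (∀ x : C, W (𝟙 x)) ∧ (∀ x : C, P (𝟙 x)) ∧ (∀ x : C, Mi (𝟙 x)) ∧
  (∀ ⦃x y z : C⦄ (f : x ⟶ y) (g : y ⟶ z), W f → W g → W (f ≫ g)) ∧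
  (∀ ⦃x y z : C⦄ (f : x ⟶ y) (g : y ⟶ z), P f → P g → P (f ≫ g)) ∧
  (∀ ⦃x y z : C⦄ (f : x ⟶ y) (g : y ⟶ z), Mi f → Mi g → Mi (f ≫ g)) ∧
  (∀ ⦃x y : C⦄ (f : x ⟶ y), W f → P f ∧ Mi f) ∧
  (∀ ⦃x y : C⦄ (f : x ⟶ y), W f → deg x = deg y) ∧
  (∀ ⦃x y : C⦄ (f : x ⟶ y), P f → ¬ W f → deg x < deg y) ∧
  (∀ ⦃x y : C⦄ (f : x ⟶ y), Mi f → ¬ W f → deg y < deg x) ∧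
  (∀ ⦃x y : C⦄ (f : x ⟶ y), Nonempty (MPFact P Mi f) ∧
    ∀ a b : MPFact P Mi f,
      Relation.ReflTransGen (fun a b => MPConn W a b ∨ MPConn W b a) a b) ∧
  (∀ ⦃x y₁ y₂ y₃ : C⦄ (f₁ : x ⟶ y₁) (f₂ : x ⟶ y₂) (f₃ : x ⟶ y₃)
      (g₁ : y₁ ⟶ y₂) (g₃ : y₃ ⟶ y₂),
    deg y₁ < deg x → Mi f₁ → Mi f₂ → Mi f₃ → W g₁ → W g₃ →
    f₁ ≫ g₁ = f₂ → f₃ ≫ g₃ = f₂ →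
    ∃ (y₀ : C) (f₀ : x ⟶ y₀) (h₁ : y₀ ⟶ y₁) (h₃ : y₀ ⟶ y₃),
      deg y₀ = deg y₁ ∧ Mi f₀ ∧ W h₁ ∧ W h₃ ∧
      f₀ ≫ h₁ = f₁ ∧ f₀ ≫ h₃ = f₃ ∧ h₁ ≫ g₁ = h₃ ≫ g₃)

/-!
In a c-Reedy structure `(W, P, Mi)` the three classes are forced: `W`, `P`, `Mi` are exactly the
basic level, basic raising and basic lowering morphisms. A morphism of `P` or `Mi` is basic, since
refining the legs of a fundamental factorization yields a `(Mi, P)`-factorization of smaller middle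
degree, whereas connectedness makes all `(Mi, P)`-factorizations of a morphism share their middle
degree. Conversely a `(Mi, P)`-factorization of a basic morphism has a level leg, which lies in `W`.

For the converse one takes these three classes and proves that factorizations exist and are
connected by well-founded induction on `min (deg x) (deg y)`. For non-basic `f`, every
`(C⃖, C⃗)`-factorization is itself fundamental. Call a factorization adapted to a fundamental
factorization `F` if it receives a map from some factorization of `F.g` followed by `F.h`. By
induction the factorizations adapted to `F` are connected, and a connecting map `F ⟶ F'` yields a
factorization adapted to both, so connectedness of the fundamental factorizations transfers to the
`(C⃖, C⃗)`-factorizations.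
-/

open Relation

theorem Relation.ReflTransGen.transfer {α β : Type*} {r : α → α → Prop} {t : β → β → Prop}
    (R : α → β → Prop) (common : ∀ a a', r a a' → ∃ b, R a b ∧ R a' b)
    (unique : ∀ a b b', R a b → R a b' → ReflTransGen t b b')
    {a a' : α} (h : ReflTransGen r a a') {b b' : β} (hb : R a b) (hb' : R a' b') :
    ReflTransGen t b b' := by
  induction h generalizing b' with
  | refl => exact unique _ _ _ hb hb'
  | tail _ hr ih =>
    obtain ⟨c, hc, hc'⟩ := common _ _ hr
    exact (ih hc).trans (unique _ _ _ hc' hb')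

theorem minDeg_induction {deg : C → Ordinal.{w}} {motive : ∀ x y : C, (x ⟶ y) → Prop}
    (ind : ∀ x y (f : x ⟶ y),
      (∀ x' y' (f' : x' ⟶ y'), min (deg x') (deg y') < min (deg x) (deg y) → motive x' y' f') →
        motive x y f)
    {x y : C} (f : x ⟶ y) : motive x y f := by
  suffices ∀ δ : Ordinal.{w}, ∀ x y (f : x ⟶ y), min (deg x) (deg y) = δ → motive x y f from
    this _ x y f rfl
  intro δ
  induction δ using WellFoundedLT.induction with
  | ind δ ih =>
    rintro x y f rfl
    exact ind x y f fun x' y' f' hlt => ih _ hlt x' y' f' rfl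

section Factorizations

variable {P Mi W : MorphismProperty C} {x y : C} {f : x ⟶ y}

abbrev MPZigzag (W : MorphismProperty C) (a b : MPFact P Mi f) : Prop :=
  ReflTransGen (SymmGen (MPConn W)) a b

theorem MPZigzag.symm {a b : MPFact P Mi f} (h : MPZigzag W a b) : MPZigzag W b a :=
  _root_.symm h

theorem FdZigzag.symm {deg : C → Ordinal.{w}} {F F' : FdFact deg f} (h : FdZigzag deg F F') :
    FdZigzag deg F' F :=
  Std.Symm.symm (r := ReflTransGen (SymmGen (FdConn deg))) _ _ h

def MPFact.toFdFact (deg : C → Ordinal.{w}) (A : MPFact P Mi f) (hx : deg A.z < deg x)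
    (hy : deg A.z < deg y) : FdFact deg f :=
  ⟨A.z, A.g, A.h, A.fac, hx, hy⟩

abbrev MPFact.toFactorisation (A : MPFact P Mi f) : Factorisation f :=
  ⟨A.z, A.g, A.h, A.fac⟩

def MPFact.precomp [Mi.IsStableUnderComposition] {w : C} {d : x ⟶ w} {e : w ⟶ y} (hd : Mi d)
    (E : MPFact P Mi e) (hf : d ≫ e = f) : MPFact P Mi f :=
  ⟨E.z, d ≫ E.g, E.h, Mi.comp_mem _ _ hd E.memMi, E.memP, by rw [assoc, E.fac, hf]⟩

theorem MPZigzag.precomp [Mi.IsStableUnderComposition] {w : C} {d : x ⟶ w} {e : w ⟶ y}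
    (hd : Mi d) (hf : d ≫ e = f) {E E' : MPFact P Mi e} (h : MPZigzag W E E') :
    MPZigzag W (E.precomp hd hf) (E'.precomp hd hf) := by
  refine ReflTransGen.lift (MPFact.precomp hd · hf) (fun a b hab => ?_) _ _ h
  rcases hab with ⟨k, hk, h₁, h₂⟩ | ⟨k, hk, h₁, h₂⟩
  · exact .of_rel ⟨k, hk, by simp [MPFact.precomp, h₁], h₂⟩
  · exact .of_rel_symm ⟨k, hk, by simp [MPFact.precomp, h₁], h₂⟩

def MPFact.homPrecomp [Mi.IsStableUnderComposition] (D : Factorisation f) (hD : Mi D.ι)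
    (E : MPFact P Mi D.π) : D ⟶ (E.precomp hD D.ι_π).toFactorisation :=
  ⟨E.g, rfl, E.fac⟩

def MPFact.postcomp {z : C} {g : x ⟶ z} (G : MPFact P Mi g) (h : z ⟶ y) (hf : g ≫ h = f) :
    Factorisation f :=
  ⟨G.z, G.g, G.h ≫ h, by rw [← assoc, G.fac, hf]⟩

theorem MPConn.nonempty_hom_postcomp {z : C} {g : x ⟶ z} {G G' : MPFact P Mi g}
    (hGG' : MPConn W G G') (h : z ⟶ y) (hf : g ≫ h = f) :
    Nonempty (G.postcomp h hf ⟶ G'.postcomp h hf) := by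
  obtain ⟨k, -, h₁, h₂⟩ := hGG'
  exact ⟨⟨k, h₁, by simp [MPFact.postcomp, ← h₂]⟩⟩

end Factorizations

namespace IsCReedyWith

variable {deg : C → Ordinal.{w}} {W P Mi : MorphismProperty C} {x y : C} {f : x ⟶ y}

theorem isMultiplicative_P (H : IsCReedyWith deg W P Mi) : P.IsMultiplicative where
  id_mem := H.2.1
  comp_mem f g := H.2.2.2.2.1 f g

theorem isMultiplicative_Mi (H : IsCReedyWith deg W P Mi) : Mi.IsMultiplicative where
  id_mem := H.2.2.1
  comp_mem f g := H.2.2.2.2.2.1 f g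

theorem P_of_W (H : IsCReedyWith deg W P Mi) (hf : W f) : P f := (H.2.2.2.2.2.2.1 f hf).1

theorem Mi_of_W (H : IsCReedyWith deg W P Mi) (hf : W f) : Mi f := (H.2.2.2.2.2.2.1 f hf).2

theorem deg_eq_of_W (H : IsCReedyWith deg W P Mi) (hf : W f) : deg x = deg y :=
  H.2.2.2.2.2.2.2.1 f hf

theorem deg_lt_of_P (H : IsCReedyWith deg W P Mi) (hf : P f) (hW : ¬ W f) : deg x < deg y :=
  H.2.2.2.2.2.2.2.2.1 f hf hW

theorem deg_lt_of_Mi (H : IsCReedyWith deg W P Mi) (hf : Mi f) (hW : ¬ W f) : deg y < deg x :=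
  H.2.2.2.2.2.2.2.2.2.1 f hf hW

theorem W_of_P_of_deg_eq (H : IsCReedyWith deg W P Mi) (hf : P f) (h : deg x = deg y) : W f :=
  by_contra fun hW => (H.deg_lt_of_P hf hW).ne h

theorem W_of_Mi_of_deg_eq (H : IsCReedyWith deg W P Mi) (hf : Mi f) (h : deg x = deg y) :
    W f :=
  by_contra fun hW => (H.deg_lt_of_Mi hf hW).ne h.symm

theorem deg_le_of_P (H : IsCReedyWith deg W P Mi) (hf : P f) : deg x ≤ deg y := by
  by_cases hW : W f
  exacts [(H.deg_eq_of_W hW).le, (H.deg_lt_of_P hf hW).le]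

theorem deg_le_of_Mi (H : IsCReedyWith deg W P Mi) (hf : Mi f) : deg y ≤ deg x := by
  by_cases hW : W f
  exacts [(H.deg_eq_of_W hW).ge, (H.deg_lt_of_Mi hf hW).le]

theorem nonempty_mpFact (H : IsCReedyWith deg W P Mi) (f : x ⟶ y) :
    Nonempty (MPFact P Mi f) :=
  (H.2.2.2.2.2.2.2.2.2.2.1 f).1

theorem mpZigzag (H : IsCReedyWith deg W P Mi) (a b : MPFact P Mi f) : MPZigzag W a b :=
  (H.2.2.2.2.2.2.2.2.2.2.1 f).2 a b

theorem deg_eq_of_mpZigzag (H : IsCReedyWith deg W P Mi) {a b : MPFact P Mi f}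
    (h : MPZigzag W a b) : deg a.z = deg b.z := by
  induction h with
  | refl => rfl
  | tail _ hab ih =>
    rcases hab with ⟨k, hk, -⟩ | ⟨k, hk, -⟩
    exacts [ih.trans (H.deg_eq_of_W hk), ih.trans (H.deg_eq_of_W hk).symm]

theorem exists_fdZigzag_toFdFact (H : IsCReedyWith deg W P Mi) (F : FdFact deg f) :
    ∃ (A : MPFact P Mi f) (hx : deg A.z < deg x) (hy : deg A.z < deg y),
      FdZigzag deg F (A.toFdFact deg hx hy) := by
  obtain ⟨Q⟩ := H.nonempty_mpFact F.g
  obtain ⟨R⟩ := H.nonempty_mpFact (Q.h ≫ F.h)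
  have hQ : deg Q.z < min (deg x) (deg y) :=
    (H.deg_le_of_P Q.memP).trans_lt (lt_min F.lt_src F.lt_tgt)
  have hR : deg R.z < min (deg x) (deg y) := (H.deg_le_of_Mi R.memMi).trans_lt hQ
  let D : FdFact deg f := ⟨Q.z, Q.g, Q.h ≫ F.h, by rw [← assoc, Q.fac, F.fac],
    (lt_min_iff.1 hQ).1, (lt_min_iff.1 hQ).2⟩
  have := H.isMultiplicative_Mi
  let A : MPFact P Mi f := R.precomp Q.memMi D.fac
  have hA := lt_min_iff.1 hR
  refine ⟨A, hA.1, hA.2, .tail (.single (Or.inr (?_ : FdConn deg D F))) (Or.inl ?_)⟩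
  exacts [⟨Q.h, Q.fac, rfl⟩, ⟨R.g, rfl, R.fac⟩]

theorem basic_of_P (H : IsCReedyWith deg W P Mi) (hf : P f) : Basic deg f := by
  refine ⟨fun F => ?_⟩
  obtain ⟨A, hx, -, -⟩ := H.exists_fdZigzag_toFdFact F
  let K : MPFact P Mi f := ⟨x, 𝟙 x, f, H.isMultiplicative_Mi.id_mem x, hf, id_comp f⟩
  exact hx.ne (H.deg_eq_of_mpZigzag (H.mpZigzag A K))

theorem basic_of_Mi (H : IsCReedyWith deg W P Mi) (hf : Mi f) : Basic deg f := by
  refine ⟨fun F => ?_⟩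
  obtain ⟨A, -, hy, -⟩ := H.exists_fdZigzag_toFdFact F
  let K : MPFact P Mi f := ⟨y, f, 𝟙 y, hf, H.isMultiplicative_P.id_mem y, comp_id f⟩
  exact hy.ne (H.deg_eq_of_mpZigzag (H.mpZigzag A K))

theorem P_of_basic (H : IsCReedyWith deg W P Mi) (hf : Basic deg f) (h : deg x ≤ deg y) :
    P f := by
  have := H.isMultiplicative_P
  obtain ⟨Q⟩ := H.nonempty_mpFact f
  have hQ : deg Q.z = deg x := (H.deg_le_of_Mi Q.memMi).eq_of_not_lt fun hlt =>
    hf.false ⟨Q.z, Q.g, Q.h, Q.fac, hlt, hlt.trans_le h⟩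
  exact Q.fac ▸ P.comp_mem _ _ (H.P_of_W (H.W_of_Mi_of_deg_eq Q.memMi hQ.symm)) Q.memP

theorem Mi_of_basic (H : IsCReedyWith deg W P Mi) (hf : Basic deg f) (h : deg y ≤ deg x) :
    Mi f := by
  have := H.isMultiplicative_Mi
  obtain ⟨Q⟩ := H.nonempty_mpFact f
  have hQ : deg Q.z = deg y := (H.deg_le_of_P Q.memP).eq_of_not_lt fun hlt =>
    hf.false ⟨Q.z, Q.g, Q.h, Q.fac, hlt.trans_le h, hlt⟩
  exact Q.fac ▸ Mi.comp_mem _ _ Q.memMi (H.Mi_of_W (H.W_of_P_of_deg_eq Q.memP hQ))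

theorem P_iff_raising (H : IsCReedyWith deg W P Mi) : P f ↔ Raising deg f :=
  ⟨fun hf => ⟨H.basic_of_P hf, H.deg_le_of_P hf⟩, fun hf => H.P_of_basic hf.1 hf.2⟩

theorem Mi_iff_lowering (H : IsCReedyWith deg W P Mi) : Mi f ↔ Lowering deg f :=
  ⟨fun hf => ⟨H.basic_of_Mi hf, H.deg_le_of_Mi hf⟩, fun hf => H.Mi_of_basic hf.1 hf.2⟩

theorem W_iff_basicLevel (H : IsCReedyWith deg W P Mi) : W f ↔ BasicLevel deg f :=
  ⟨fun hf => ⟨H.basic_of_P (H.P_of_W hf), H.deg_eq_of_W hf⟩,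
    fun hf => H.W_of_P_of_deg_eq (H.P_of_basic hf.1 hf.2.le) hf.2⟩

theorem fdZigzag_toFdFact (H : IsCReedyWith deg W P Mi) {A B : MPFact P Mi f}
    (hAx : deg A.z < deg x) (hAy : deg A.z < deg y) (hBx : deg B.z < deg x)
    (hBy : deg B.z < deg y) :
    FdZigzag deg (A.toFdFact deg hAx hAy) (B.toFdFact deg hBx hBy) := by
  have hdeg (B : MPFact P Mi f) : deg B.z = deg A.z := H.deg_eq_of_mpZigzag (H.mpZigzag B A)
  refine ReflTransGen.lift (fun B => B.toFdFact deg ((hdeg B).trans_lt hAx)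
    ((hdeg B).trans_lt hAy)) (fun a b hab => ?_) A B (H.mpZigzag A B)
  exact hab.imp (fun ⟨k, _, h₁, h₂⟩ => ⟨k, h₁, h₂⟩) (fun ⟨k, _, h₁, h₂⟩ => ⟨k, h₁, h₂⟩)

theorem fdZigzag (H : IsCReedyWith deg W P Mi) (F F' : FdFact deg f) : FdZigzag deg F F' := by
  obtain ⟨A, hAx, hAy, hA⟩ := H.exists_fdZigzag_toFdFact F
  obtain ⟨B, hBx, hBy, hB⟩ := H.exists_fdZigzag_toFdFact F'
  exact (hA.trans (H.fdZigzag_toFdFact hAx hAy hBx hBy)).trans hB.symm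

theorem raising_comp (H : IsCReedyWith deg W P Mi) {z : C} {g : y ⟶ z} (hf : Raising deg f)
    (hg : Raising deg g) : Raising deg (f ≫ g) :=
  have := H.isMultiplicative_P
  H.P_iff_raising.1 (P.comp_mem _ _ (H.P_iff_raising.2 hf) (H.P_iff_raising.2 hg))

theorem lowering_comp (H : IsCReedyWith deg W P Mi) {z : C} {g : y ⟶ z} (hf : Lowering deg f)
    (hg : Lowering deg g) : Lowering deg (f ≫ g) :=
  have := H.isMultiplicative_Mi
  H.Mi_iff_lowering.1 (Mi.comp_mem _ _ (H.Mi_iff_lowering.2 hf) (H.Mi_iff_lowering.2 hg))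

theorem almostCReedy (H : IsCReedyWith deg W P Mi) : AlmostCReedy deg := by
  have := H.isMultiplicative_P
  have := H.isMultiplicative_Mi
  refine ⟨fun x => H.basic_of_P (P.id_mem x), ?_, fun _ _ _ => H.fdZigzag, ?_, ?_⟩
  · intro x y z f g hxy hyz hf hg
    exact H.basic_of_P (P.comp_mem _ _ (H.P_of_basic hf hxy.le) (H.P_of_basic hg hyz.le))
  · intro x y z f g hf hlt hg heq
    exact H.basic_of_Mi (Mi.comp_mem _ _ (H.Mi_of_basic hf hlt.le) (H.Mi_of_basic hg heq.ge))
  · intro x y₁ y₂ y₃ f₁ f₂ f₃ g₁ g₃ hlt e₁₂ e₂₃ hf₁ hf₂ hf₃ hg₁ hg₃ hfac₁ hfac₃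
    obtain ⟨y₀, f₀, k₁, k₃, hdeg, hf₀, hk₁, hk₃, hcone⟩ := H.2.2.2.2.2.2.2.2.2.2.2 f₁ f₂ f₃ g₁ g₃
      hlt (H.Mi_of_basic hf₁ hlt.le) (H.Mi_of_basic hf₂ (e₁₂.symm.trans_lt hlt).le)
      (H.Mi_of_basic hf₃ ((e₁₂.trans e₂₃).symm.trans_lt hlt).le)
      (H.W_iff_basicLevel.2 ⟨hg₁, e₁₂⟩) (H.W_iff_basicLevel.2 ⟨hg₃, e₂₃.symm⟩) hfac₁ hfac₃
    exact ⟨y₀, f₀, k₁, k₃, hdeg, H.basic_of_Mi hf₀, H.basic_of_P (H.P_of_W hk₁),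
      H.basic_of_P (H.P_of_W hk₃), hcone⟩

end IsCReedyWith

section Construction

variable (deg : C → Ordinal.{w})

def raisingMorphisms : MorphismProperty C := fun _ _ f => Raising deg f

def loweringMorphisms : MorphismProperty C := fun _ _ f => Lowering deg f

def basicLevelMorphisms : MorphismProperty C := fun _ _ f => BasicLevel deg f

abbrev BasicFact {x y : C} (f : x ⟶ y) : Type _ :=
  MPFact (raisingMorphisms deg) (loweringMorphisms deg) f

def FactConnected {x y : C} (f : x ⟶ y) : Prop :=
  ∀ A B : BasicFact deg f, MPZigzag (basicLevelMorphisms deg) A B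

theorem nonempty_basicFact [(raisingMorphisms deg).IsMultiplicative]
    [(loweringMorphisms deg).IsMultiplicative] {x y : C} (f : x ⟶ y) :
    Nonempty (BasicFact deg f) := by
  induction f using minDeg_induction with
  | ind x y f ih =>
    by_cases hf : Basic deg f
    · rcases le_total (deg x) (deg y) with hxy | hyx
      · exact ⟨⟨x, 𝟙 x, f, (loweringMorphisms deg).id_mem x, ⟨hf, hxy⟩, id_comp f⟩⟩
      · exact ⟨⟨y, f, 𝟙 y, ⟨hf, hyx⟩, (raisingMorphisms deg).id_mem y, comp_id f⟩⟩
    obtain ⟨F⟩ := not_isEmpty_iff.1 hf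
    have hz : deg F.z < min (deg x) (deg y) := lt_min F.lt_src F.lt_tgt
    obtain ⟨G⟩ := ih _ _ F.g (min_le_right _ _ |>.trans_lt hz)
    obtain ⟨E⟩ := ih _ _ (G.h ≫ F.h) (min_le_left _ _ |>.trans_lt (G.memP.2.trans_lt hz))
    exact ⟨E.precomp G.memMi (by rw [← assoc, G.fac, F.fac])⟩

variable {deg}

theorem exists_hom_toFactorisation [(raisingMorphisms deg).IsMultiplicative]
    [(loweringMorphisms deg).IsMultiplicative] {x y : C} {f : x ⟶ y} (D : Factorisation f)
    (hD : loweringMorphisms deg D.ι) :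
    ∃ A : BasicFact deg f, Nonempty (D ⟶ A.toFactorisation) :=
  have ⟨E⟩ := nonempty_basicFact deg D.π
  ⟨_, ⟨MPFact.homPrecomp D hD E⟩⟩

theorem deg_lt_of_not_basic [(raisingMorphisms deg).IsMultiplicative]
    [(loweringMorphisms deg).IsMultiplicative] {x y : C} {f : x ⟶ y} (hf : ¬ Basic deg f)
    (A : BasicFact deg f) : deg A.z < deg x ∧ deg A.z < deg y :=
  ⟨A.memMi.2.lt_of_ne fun h => hf <| A.fac ▸
      ((raisingMorphisms deg).comp_mem _ _ ⟨A.memMi.1, h.ge⟩ A.memP).1,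
    A.memP.2.lt_of_ne fun h => hf <| A.fac ▸
      ((loweringMorphisms deg).comp_mem _ _ A.memMi ⟨A.memP.1, h.ge⟩).1⟩

theorem factConnected_of_basic [(raisingMorphisms deg).IsMultiplicative]
    [(loweringMorphisms deg).IsMultiplicative] {x y : C} {f : x ⟶ y} (hf : Basic deg f) :
    FactConnected deg f := by
  suffices ∃ K : BasicFact deg f, ∀ A, MPZigzag (basicLevelMorphisms deg) K A by
    obtain ⟨K, hK⟩ := this
    exact fun A B => (hK A).symm.trans (hK B)
  rcases le_total (deg x) (deg y) with hxy | hyx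
  · refine ⟨⟨x, 𝟙 x, f, (loweringMorphisms deg).id_mem x, ⟨hf, hxy⟩, id_comp f⟩, fun A => ?_⟩
    have hA : deg A.z = deg x := A.memMi.2.eq_of_not_lt fun hlt =>
      hf.false ⟨A.z, A.g, A.h, A.fac, hlt, hlt.trans_le hxy⟩
    exact .single (.of_rel ⟨A.g, ⟨A.memMi.1, hA.symm⟩, id_comp A.g, A.fac⟩)
  · refine ⟨⟨y, f, 𝟙 y, ⟨hf, hyx⟩, (raisingMorphisms deg).id_mem y, comp_id f⟩, fun A => ?_⟩
    have hA : deg A.z = deg y := A.memP.2.eq_of_not_lt fun hlt =>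
      hf.false ⟨A.z, A.g, A.h, A.fac, hlt.trans_le hyx, hlt⟩
    exact .single (.of_rel_symm ⟨A.h, ⟨A.memP.1, hA⟩, A.fac, comp_id A.h⟩)

theorem exists_mpConn_precomp [(raisingMorphisms deg).IsMultiplicative]
    [(loweringMorphisms deg).IsMultiplicative] {x y : C} {f : x ⟶ y} {D : Factorisation f}
    (hD : loweringMorphisms deg D.ι) (hx : deg D.mid < deg x) {A : BasicFact deg f}
    (φ : D ⟶ A.toFactorisation) :
    ∃ E : BasicFact deg D.π, MPConn (basicLevelMorphisms deg) (E.precomp hD D.ι_π) A := by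
  obtain ⟨R⟩ := nonempty_basicFact deg φ.h
  have hR : deg R.z = deg A.z := R.memP.2.eq_of_not_lt fun hlt =>
    A.memMi.1.false ⟨R.z, D.ι ≫ R.g, R.h, by rw [assoc, R.fac, φ.ι_h],
      R.memMi.2.trans_lt hx, hlt⟩
  refine ⟨⟨R.z, R.g, R.h ≫ A.h, R.memMi, (raisingMorphisms deg).comp_mem _ _ R.memP A.memP,
    by rw [← assoc, R.fac, φ.h_π]⟩, R.h, ⟨R.memP.1, hR⟩, ?_, rfl⟩
  simp only [MPFact.precomp, assoc, R.fac, φ.ι_h]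

theorem mpZigzag_of_homs [(raisingMorphisms deg).IsMultiplicative]
    [(loweringMorphisms deg).IsMultiplicative] {x y : C} {f : x ⟶ y} {D : Factorisation f}
    (hD : loweringMorphisms deg D.ι) (hx : deg D.mid < deg x) (hconn : FactConnected deg D.π)
    {A A' : BasicFact deg f} (φ : D ⟶ A.toFactorisation) (φ' : D ⟶ A'.toFactorisation) :
    MPZigzag (basicLevelMorphisms deg) A A' := by
  obtain ⟨E, hE⟩ := exists_mpConn_precomp hD hx φ
  obtain ⟨E', hE'⟩ := exists_mpConn_precomp hD hx φ'
  exact (ReflTransGen.single (.of_rel_symm hE)).trans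
    (((hconn E E').precomp hD D.ι_π).tail (.of_rel hE'))

theorem mpZigzag_of_postcomp [(raisingMorphisms deg).IsMultiplicative]
    [(loweringMorphisms deg).IsMultiplicative] {x y z : C} {f : x ⟶ y} {g : x ⟶ z}
    {h : z ⟶ y} (hf : g ≫ h = f) (hz : deg z < deg x)
    (hconn : ∀ G : BasicFact deg g, FactConnected deg (G.h ≫ h)) {G G' : BasicFact deg g}
    (hG : MPZigzag (basicLevelMorphisms deg) G G') {A A' : BasicFact deg f}
    (φ : G.postcomp h hf ⟶ A.toFactorisation) (φ' : G'.postcomp h hf ⟶ A'.toFactorisation) :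
    MPZigzag (basicLevelMorphisms deg) A A' := by
  refine hG.transfer (fun G A => Nonempty (G.postcomp h hf ⟶ A.toFactorisation))
    (fun G₀ G₁ hG₀₁ => ?_) (fun G A A' ⟨φ⟩ ⟨φ'⟩ => ?_) ⟨φ⟩ ⟨φ'⟩
  · rcases hG₀₁ with hG₀₁ | hG₁₀
    · obtain ⟨ψ⟩ := hG₀₁.nonempty_hom_postcomp h hf
      obtain ⟨A, ⟨χ⟩⟩ := exists_hom_toFactorisation (G₁.postcomp h hf) G₁.memMi
      exact ⟨A, ⟨ψ ≫ χ⟩, ⟨χ⟩⟩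
    · obtain ⟨ψ⟩ := hG₁₀.nonempty_hom_postcomp h hf
      obtain ⟨A, ⟨χ⟩⟩ := exists_hom_toFactorisation (G₀.postcomp h hf) G₀.memMi
      exact ⟨A, ⟨χ⟩, ⟨ψ ≫ χ⟩⟩
  · exact mpZigzag_of_homs G.memMi (G.memP.2.trans_lt hz) (hconn G) φ φ'

def FdFact.Adapted {x y : C} {f : x ⟶ y} (F : FdFact deg f) (A : BasicFact deg f) : Prop :=
  ∃ G : BasicFact deg F.g, Nonempty (G.postcomp F.h F.fac ⟶ A.toFactorisation)

theorem FdFact.adapted_toFdFact [(raisingMorphisms deg).ContainsIdentities] {x y : C}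
    {f : x ⟶ y} (A : BasicFact deg f) (hx : deg A.z < deg x) (hy : deg A.z < deg y) :
    (A.toFdFact deg hx hy).Adapted A :=
  ⟨⟨A.z, A.g, 𝟙 _, A.memMi, (raisingMorphisms deg).id_mem _, comp_id _⟩, ⟨⟨𝟙 _, comp_id _, rfl⟩⟩⟩

theorem FdConn.exists_adapted [(raisingMorphisms deg).IsMultiplicative]
    [(loweringMorphisms deg).IsMultiplicative] {x y : C} {f : x ⟶ y} {F F' : FdFact deg f}
    (hFF' : FdConn deg F F') : ∃ A, F.Adapted A ∧ F'.Adapted A := by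
  obtain ⟨k, hk₁, hk₂⟩ := hFF'
  obtain ⟨G⟩ := nonempty_basicFact deg F.g
  obtain ⟨M⟩ := nonempty_basicFact deg (G.h ≫ k)
  let G' : BasicFact deg F'.g := M.precomp G.memMi (by rw [← assoc, G.fac, hk₁])
  let ψ : G.postcomp F.h F.fac ⟶ G'.postcomp F'.h F'.fac :=
    ⟨M.g, rfl, by
      show M.g ≫ M.h ≫ F'.h = G.h ≫ F.h
      rw [← hk₂, ← assoc, M.fac, assoc]⟩
  obtain ⟨A, ⟨χ⟩⟩ := exists_hom_toFactorisation (G'.postcomp F'.h F'.fac) G'.memMi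
  exact ⟨A, ⟨G, ⟨ψ ≫ χ⟩⟩, ⟨G', ⟨χ⟩⟩⟩

theorem FdFact.mpZigzag_of_adapted [(raisingMorphisms deg).IsMultiplicative]
    [(loweringMorphisms deg).IsMultiplicative] {x y : C} {f : x ⟶ y}
    (ih : ∀ x' y' (f' : x' ⟶ y'), min (deg x') (deg y') < min (deg x) (deg y) →
      FactConnected deg f')
    (F : FdFact deg f) {A A' : BasicFact deg f} (hA : F.Adapted A) (hA' : F.Adapted A') :
    MPZigzag (basicLevelMorphisms deg) A A' := by
  obtain ⟨G, ⟨φ⟩⟩ := hA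
  obtain ⟨G', ⟨φ'⟩⟩ := hA'
  have hz : deg F.z < min (deg x) (deg y) := lt_min F.lt_src F.lt_tgt
  exact mpZigzag_of_postcomp F.fac F.lt_src
    (fun G => ih _ _ _ ((min_le_left _ _).trans_lt (G.memP.2.trans_lt hz)))
    (ih _ _ F.g ((min_le_right _ _).trans_lt hz) G G') φ φ'

theorem factConnected [(raisingMorphisms deg).IsMultiplicative]
    [(loweringMorphisms deg).IsMultiplicative]
    (hconn : ∀ ⦃x y : C⦄ (f : x ⟶ y) (F F' : FdFact deg f), FdZigzag deg F F')
    {x y : C} (f : x ⟶ y) : FactConnected deg f := by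
  induction f using minDeg_induction with
  | ind x y f ih =>
    by_cases hf : Basic deg f
    · exact factConnected_of_basic hf
    intro A B
    obtain ⟨hAx, hAy⟩ := deg_lt_of_not_basic hf A
    obtain ⟨hBx, hBy⟩ := deg_lt_of_not_basic hf B
    refine (hconn f (A.toFdFact deg hAx hAy) (B.toFdFact deg hBx hBy)).transfer FdFact.Adapted
      (fun F F' hFF' => ?_) (fun F _ _ => F.mpZigzag_of_adapted ih)
      (FdFact.adapted_toFdFact A hAx hAy) (FdFact.adapted_toFdFact B hBx hBy)
    rcases hFF' with hFF' | hF'F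
    · exact hFF'.exists_adapted
    · exact hF'F.exists_adapted.imp fun _ => And.symm

end Construction

theorem AlmostCReedy.isCReedyWith {deg : C → Ordinal.{w}} (h : AlmostCReedy deg)
    [(raisingMorphisms deg).IsMultiplicative] [(loweringMorphisms deg).IsMultiplicative] :
    IsCReedyWith deg (basicLevelMorphisms deg) (raisingMorphisms deg) (loweringMorphisms deg) := by
  obtain ⟨-, hlevel, hconn, -, hcone⟩ := h
  refine ⟨fun x => ⟨((raisingMorphisms deg).id_mem x).1, rfl⟩, (raisingMorphisms deg).id_mem,
    (loweringMorphisms deg).id_mem, fun _ _ _ f g hf hg => ⟨hlevel f g hf.2 hg.2 hf.1 hg.1,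
    hf.2.trans hg.2⟩, fun _ _ _ => (raisingMorphisms deg).comp_mem,
    fun _ _ _ => (loweringMorphisms deg).comp_mem,
    fun _ _ _ hf => ⟨⟨hf.1, hf.2.le⟩, ⟨hf.1, hf.2.ge⟩⟩, fun _ _ _ hf => hf.2,
    fun _ _ _ hf hW => hf.2.lt_of_ne fun h => hW ⟨hf.1, h⟩,
    fun _ _ _ hf hW => hf.2.lt_of_ne fun h => hW ⟨hf.1, h.symm⟩,
    fun _ _ f => ⟨nonempty_basicFact deg f, factConnected hconn f⟩, ?_⟩
  intro x y₁ y₂ y₃ f₁ f₂ f₃ g₁ g₃ hlt hf₁ hf₂ hf₃ hg₁ hg₃ hfac₁ hfac₃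
  obtain ⟨y₀, f₀, k₁, k₃, hdeg, hf₀, hk₁, hk₃, hcone⟩ := hcone f₁ f₂ f₃ g₁ g₃ hlt hg₁.2
    hg₃.2.symm hf₁.1 hf₂.1 hf₃.1 hg₁.1 hg₃.1 hfac₁ hfac₃
  exact ⟨y₀, f₀, k₁, k₃, hdeg, ⟨hf₀, (hdeg.trans_lt hlt).le⟩, ⟨hk₁, hdeg⟩,
    ⟨hk₃, hdeg.trans (hg₁.2.trans hg₃.2.symm)⟩, hcone⟩

/-- A category with an ordinal degree function is a c-Reedy category (for some
choice of the wide subcategories `C⃡`, `C⃗`, `C⃖`) if and only if it is almost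
c-Reedy and the classes of basic non-strictly degree-raising and basic
non-strictly degree-lowering morphisms are each closed under composition. -/
theorem isCReedy_iff_almostCReedy_and_closed (deg : C → Ordinal.{w}) :
    (∃ W P Mi : MorphismProperty C, IsCReedyWith deg W P Mi) ↔
      (AlmostCReedy deg ∧
        (∀ ⦃x y z : C⦄ (f : x ⟶ y) (g : y ⟶ z),
          Raising deg f → Raising deg g → Raising deg (f ≫ g)) ∧
        (∀ ⦃x y z : C⦄ (f : x ⟶ y) (g : y ⟶ z),
          Lowering deg f → Lowering deg g → Lowering deg (f ≫ g))) := by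
  constructor
  · rintro ⟨W, P, Mi, H⟩
    exact ⟨H.almostCReedy, fun _ _ _ _ _ => H.raising_comp, fun _ _ _ _ _ => H.lowering_comp⟩
  · rintro ⟨h, hraising, hlowering⟩
    have : (raisingMorphisms deg).IsMultiplicative :=
      { id_mem := fun x => ⟨h.1 x, le_rfl⟩, comp_mem f g := hraising f g }
    have : (loweringMorphisms deg).IsMultiplicative :=
      { id_mem := fun x => ⟨h.1 x, le_rfl⟩, comp_mem f g := hlowering f g }
    exact ⟨_, _, _, h.isCReedyWith⟩
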